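/- (Lemma F.2, sandwich bound on v_k) For every realization of the samples and every k ∈ {1,…,K}: V^{π'_{k−1}} + Σ_{j=0}^{k−1} γ^j π_{k−1} P_{k−1−j}^{k−2} ε_{k−j} − γ^k H·1 ≤ v_k ≤ V^{π'_k} + Σ_{j=0}^{k−1} γ^j π_k P_{k−j}^{k−1} ε_{k−j} + γ^k H·1. -/
import Mathlib


open MeasureTheory ProbabilityTheory Finset Real

noncomputable section

/-- The transition kernel `P` applied to a state-value function:
`(Pv)(x,a) = Σ_z P(z|x,a) v(z)`. -/
def mdpP {S A : Type} [Fintype S] (P : S → A → S → ℝ) (v : S → ℝ) : S → A → ℝ :=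
  fun x a => ∑ z, P x a z * v z

/-- A policy applied to a Q-function: `(poq)(x) = Σ_a po(a|x) q(x,a)`. -/
def polAct {S A : Type} [Fintype A] (po : S → A → ℝ) (q : S → A → ℝ) : S → ℝ :=
  fun x => ∑ a, po x a * q x a

/-- `P` is a transition kernel. -/
def IsKernel {S A : Type} [Fintype S] (P : S → A → S → ℝ) : Prop :=
  (∀ x a z, 0 ≤ P x a z) ∧ ∀ x a, ∑ z, P x a z = 1

/-- `po` is a (Markov) policy. -/
def IsPolicy {S A : Type} [Fintype A] (po : S → A → ℝ) : Prop :=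
  (∀ x a, 0 ≤ po x a) ∧ ∀ x, ∑ a, po x a = 1

/-- The deterministic policy induced by `d : S → A`. -/
def detPol {S A : Type} [DecidableEq A] (d : S → A) : S → A → ℝ :=
  fun x a => if a = d x then 1 else 0

/-- The Bellman operator `T^po q = r + γ P (po q)`. -/
def bellmanOp {S A : Type} [Fintype S] [Fintype A] (P : S → A → S → ℝ) (r : S → A → ℝ)
    (γ : ℝ) (po : S → A → ℝ) (qf : S → A → ℝ) : S → A → ℝ :=
  fun x a => r x a + γ * mdpP P (polAct po qf) x a

/-- `P^po = Ppo` acting on Q-functions. -/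
def Ppi {S A : Type} [Fintype S] [Fintype A] (P : S → A → S → ℝ) (po : S → A → ℝ)
    (qf : S → A → ℝ) : S → A → ℝ :=
  mdpP P (polAct po qf)

/-- `PprodN P po j n` is `P^{po_{j+n-1}} ⋯ P^{po_j}` (`n` factors, identity for `n = 0`);
this is `P_j^i` of the paper with `n = i + 1 - j` factors. -/
def PprodN {S A : Type} [Fintype S] [Fintype A] (P : S → A → S → ℝ)
    (po : ℕ → S → A → ℝ) (j : ℕ) : ℕ → (S → A → ℝ) → S → A → ℝ
  | 0, qf => qf
  | n + 1, qf => Ppi P (po (j + n)) (PprodN P po j n qf)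

/-- The conditional standard deviation `σ(v)(x,a) = √(P(v²)(x,a) − (Pv)(x,a)²)`. -/
def sigmaP {S A : Type} [Fintype S] (P : S → A → S → ℝ) (v : S → ℝ) : S → A → ℝ :=
  fun x a => Real.sqrt (mdpP P (fun z => v z ^ 2) x a - (mdpP P v x a) ^ 2)

/-- `𝒩^po = Σ_{t=0}^∞ (γ po P)^t` acting on state-value functions. -/
def Npol {S A : Type} [Fintype S] [Fintype A] (P : S → A → S → ℝ) (γ : ℝ)
    (po : S → A → ℝ) (vf : S → ℝ) : S → ℝ :=
  fun x => ∑' t : ℕ, ((fun uf : S → ℝ => fun z => γ * polAct po (mdpP P uf) z)^[t] vf) x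

set_option linter.unusedSectionVars false

section aux
variable {S A : Type} [Fintype S] [Fintype A] [DecidableEq A]

lemma polAct_detPol (d : S → A) (q : S → A → ℝ) (x : S) :
    polAct (detPol d) q x = q x (d x) := by
  unfold polAct detPol
  rw [Finset.sum_eq_single (d x)] <;> simp +contextual

lemma isPolicy_detPol (d : S → A) : IsPolicy (detPol d) := by
  constructor
  · intro x a; unfold detPol; positivity
  · intro x; simp [detPol]

lemma mdpP_mono (P : S → A → S → ℝ) (hP : ∀ x a z, 0 ≤ P x a z) {f g : S → ℝ}
    (h : ∀ z, f z ≤ g z) (x : S) (a : A) :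
    mdpP P f x a ≤ mdpP P g x a :=
  Finset.sum_le_sum fun z _ => mul_le_mul_of_nonneg_left (h z) (hP x a z)

lemma mdpP_const (P : S → A → S → ℝ) (hP : ∀ x a, ∑ z, P x a z = 1) (c : ℝ) (x : S) (a : A) :
    mdpP P (fun _ => c) x a = c := by
  unfold mdpP
  rw [← Finset.sum_mul, hP, one_mul]

lemma mdpP_abs_le (P : S → A → S → ℝ) (hP : IsKernel P) {f : S → ℝ} {C : ℝ}
    (h : ∀ z, |f z| ≤ C) (x : S) (a : A) :
    |mdpP P f x a| ≤ C := by
  rw [abs_le]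
  constructor
  · calc -C = mdpP P (fun _ => -C) x a := (mdpP_const P hP.2 _ x a).symm
      _ ≤ _ := mdpP_mono P hP.1 (fun z => neg_le_of_abs_le (h z)) x a
  · calc mdpP P f x a ≤ mdpP P (fun _ => C) x a :=
        mdpP_mono P hP.1 (fun z => le_of_abs_le (h z)) x a
      _ = C := mdpP_const P hP.2 _ x a

lemma mdpP_smul (P : S → A → S → ℝ) (c : ℝ) (f : S → ℝ) (x : S) (a : A) :
    mdpP P (fun z => c * f z) x a = c * mdpP P f x a := by
  unfold mdpP; rw [Finset.mul_sum]; exact Finset.sum_congr rfl fun z _ => by ring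

lemma mdpP_decomp (P : S → A → S → ℝ)
    (hP : ∀ x a, ∑ z, P x a z = 1) (f : S → ℝ) (n : ℕ) (F : ℕ → S → ℝ) (c : ℝ) (x : S) (a : A) :
    mdpP P (fun z => f z + ∑ j ∈ Finset.range n, F j z + c) x a
      = mdpP P f x a + ∑ j ∈ Finset.range n, mdpP P (F j) x a + c := by
  unfold mdpP
  simp only [mul_add, Finset.sum_add_distrib, Finset.mul_sum]
  congr 1
  · congr 1
    exact Finset.sum_comm
  · rw [← Finset.sum_mul, hP, one_mul]

lemma fixedPoint_abs_le [Nonempty S] [Nonempty A] (P : S → A → S → ℝ) (hP : IsKernel P)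
    (r : S → A → ℝ) (hr : ∀ x a, |r x a| ≤ 1) {γ : ℝ} (hγ0 : 0 ≤ γ) (hγ1 : γ < 1)
    (po : S → A → ℝ) (hpo : IsPolicy po) (q : S → A → ℝ)
    (hq : bellmanOp P r γ po q = q) (x : S) (a : A) :
    |q x a| ≤ 1 / (1 - γ) := by
  obtain ⟨⟨x₀, a₀⟩, hmax⟩ := Finite.exists_max (fun p : S × A => |q p.1 p.2|)
  have hC : ∀ z, |polAct po q z| ≤ |q x₀ a₀| := by
    intro z
    unfold polAct
    calc |∑ b, po z b * q z b| ≤ ∑ b, |po z b * q z b| := Finset.abs_sum_le_sum_abs _ _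
      _ ≤ ∑ b, po z b * |q x₀ a₀| := by
          apply Finset.sum_le_sum; intro b _
          rw [abs_mul, abs_of_nonneg (hpo.1 z b)]
          exact mul_le_mul_of_nonneg_left (hmax (z, b)) (hpo.1 z b)
      _ = |q x₀ a₀| := by rw [← Finset.sum_mul, hpo.2, one_mul]
  have hfix : r x₀ a₀ + γ * mdpP P (polAct po q) x₀ a₀ = q x₀ a₀ := congrFun (congrFun hq x₀) a₀
  have hm := mdpP_abs_le P hP hC x₀ a₀
  have key : |q x₀ a₀| ≤ 1 + γ * |q x₀ a₀| := by
    have habs : |q x₀ a₀| = |r x₀ a₀ + γ * mdpP P (polAct po q) x₀ a₀| := by rw [hfix]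
    nth_rewrite 1 [habs]
    calc |r x₀ a₀ + γ * mdpP P (polAct po q) x₀ a₀|
        ≤ |r x₀ a₀| + |γ * mdpP P (polAct po q) x₀ a₀| := abs_add_le _ _
      _ = |r x₀ a₀| + γ * |mdpP P (polAct po q) x₀ a₀| := by rw [abs_mul, abs_of_nonneg hγ0]
      _ ≤ 1 + γ * |q x₀ a₀| := by
          have := hr x₀ a₀
          nlinarith
  have h1 : |q x₀ a₀| ≤ 1/(1-γ) := by
    rw [le_div_iff₀ (by linarith)]; nlinarith
  exact (hmax (x, a)).trans h1

end aux

lemma mdpP_decomp_sub {S A : Type} [Fintype S] (P : S → A → S → ℝ)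
    (hP : ∀ x a, ∑ z, P x a z = 1) (f : S → ℝ) (n : ℕ) (F : ℕ → S → ℝ) (c : ℝ) (x : S) (a : A) :
    mdpP P (fun z => f z + ∑ j ∈ Finset.range n, F j z - c) x a
      = mdpP P f x a + ∑ j ∈ Finset.range n, mdpP P (F j) x a - c := by
  unfold mdpP
  simp only [mul_sub, mul_add, Finset.sum_sub_distrib, Finset.sum_add_distrib, Finset.mul_sum]
  congr 1
  · congr 1
    exact Finset.sum_comm
  · rw [← Finset.sum_mul, hP, one_mul]

lemma PprodN_succ {S A : Type} [Fintype S] [Fintype A] (P : S → A → S → ℝ)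
    (po : ℕ → S → A → ℝ) (j n : ℕ) (qf : S → A → ℝ) :
    PprodN P po j (n+1) qf = mdpP P (polAct (po (j+n)) (PprodN P po j n qf)) := rfl

/-- Lemma F.2: sandwich bound on v_k. -/
theorem mdvi_vk_sandwich_bound
    (α : ℝ) (hα0 : 0 ≤ α) (hα1 : α < 1)
    (S A : Type) [Fintype S] [Fintype A] [Nonempty S] [Nonempty A] [DecidableEq A]
    (P : S → A → S → ℝ) (hP : IsKernel P)
    (r : S → A → ℝ) (hr : ∀ x a, |r x a| ≤ 1)
    (γ H : ℝ) (hγ0 : 0 ≤ γ) (hγ1 : γ < 1) (hH : H = 1 / (1 - γ))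
    (Qpol : (S → A → ℝ) → S → A → ℝ)
    (hQ : ∀ po, IsPolicy po → bellmanOp P r γ po (Qpol po) = Qpol po)
    (K M : ℕ) (hM : 1 ≤ M)
    (y : ℕ → ℕ → S → A → S)
    (w v : ℕ → S → ℝ) (sq qv : ℕ → S → A → ℝ)
    (hs0 : ∀ x a, sq 0 x a = 0) (hw0 : ∀ x, w 0 x = 0)
    (hv : ∀ k x, v k x = w k x - α * w (k - 1) x)
    (hqv : ∀ k x a, qv (k + 1) x a
      = r x a + (γ / (M : ℝ)) * ∑ m ∈ Finset.range M, v k (y k m x a))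
    (hsq : ∀ k x a, sq (k + 1) x a = qv (k + 1) x a + α * sq k x a)
    (hwk : ∀ k x, w (k + 1) x = ⨆ a, sq (k + 1) x a)
    (pol : ℕ → S → A)
    (hgreedy : ∀ k x a, sq k x a ≤ sq k x (pol k x))
    (εf Ef : ℕ → S → A → ℝ)
    (hεf : ∀ k x a, εf (k + 1) x a
      = (γ / (M : ℝ)) * ∑ m ∈ Finset.range M, v k (y k m x a) - γ * mdpP P (v k) x a)
    (hEf : ∀ k x a, Ef k x a = ∑ j ∈ Finset.range k, α ^ (k - 1 - j) * εf (j + 1) x a)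
    (u : ℕ → S → A → ℝ)
    (hu0 : u 0 = Qpol (detPol (pol 0)))
    (hurec : ∀ k, u (k + 1) = bellmanOp P r γ (detPol (pol (k + 1))) (u k))
    :
    ∀ k ∈ Finset.Icc 1 K, ∀ x,
      (polAct (detPol (pol (k - 1))) (u (k - 2)) x
          + ∑ j ∈ Finset.range k, γ ^ j * polAct (detPol (pol (k - 1)))
              (PprodN P (fun i => detPol (pol i)) (k - 1 - j) j (εf (k - j))) x
          - γ ^ k * H
        ≤ v k x) ∧
      v k x ≤
        polAct (detPol (pol k)) (u (k - 1)) x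
          + ∑ j ∈ Finset.range k, γ ^ j * polAct (detPol (pol k))
              (PprodN P (fun i => detPol (pol i)) (k - j) j (εf (k - j))) x
          + γ ^ k * H := by
  obtain ⟨hPpos, hPsum⟩ := hP
  have hu0abs : ∀ x a, |u 0 x a| ≤ H := by
    intro x a
    rw [hH, hu0]
    exact fixedPoint_abs_le P ⟨hPpos, hPsum⟩ r hr hγ0 hγ1 _ (isPolicy_detPol _) _
      (hQ _ (isPolicy_detPol _)) x a
  have hsup : ∀ k x a, sq k x a ≤ w k x := by
    intro k x a
    cases k with
    | zero => rw [hs0, hw0]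
    | succ n => rw [hwk]; exact le_ciSup (Set.Finite.bddAbove (Set.finite_range _)) a
  have hwpol : ∀ k x, w k x = sq k x (pol k x) := by
    intro k x
    cases k with
    | zero => rw [hw0, hs0]
    | succ n =>
      rw [hwk]
      exact le_antisymm (ciSup_le fun a => hgreedy _ x a)
        (le_ciSup (Set.Finite.bddAbove (Set.finite_range _)) _)
  have hv0 : ∀ x, v 0 x = 0 := by
    intro x; rw [hv]; simp [hw0]
  have hqd : ∀ k x a, qv (k+1) x a = r x a + γ * mdpP P (v k) x a + εf (k+1) x a := by
    intro k x a; rw [hqv k x a, hεf k x a]; ring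
  have hsandL : ∀ k x, qv (k+1) x (pol k x) ≤ v (k+1) x := by
    intro k x
    have hv1 : v (k+1) x = w (k+1) x - α * w k x := by have h := hv (k+1) x; simpa using h
    have h1 : sq (k+1) x (pol k x) ≤ w (k+1) x := hsup _ x _
    have h2 : sq (k+1) x (pol k x) = qv (k+1) x (pol k x) + α * sq k x (pol k x) := hsq k x _
    have h3 : w k x = sq k x (pol k x) := hwpol k x
    rw [hv1, h3]; linarith
  have hsandU : ∀ k x, v (k+1) x ≤ qv (k+1) x (pol (k+1) x) := by
    intro k x
    have hv1 : v (k+1) x = w (k+1) x - α * w k x := by have h := hv (k+1) x; simpa using h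
    have h1 : sq k x (pol (k+1) x) ≤ w k x := hsup _ x _
    have h2 : sq (k+1) x (pol (k+1) x)
        = qv (k+1) x (pol (k+1) x) + α * sq k x (pol (k+1) x) := hsq k x _
    have h3 : w (k+1) x = sq (k+1) x (pol (k+1) x) := hwpol (k+1) x
    have h4 : α * sq k x (pol (k+1) x) ≤ α * w k x := mul_le_mul_of_nonneg_left h1 hα0
    rw [hv1, h3]; linarith
  have hub : ∀ k x a, u k x a
      = r x a + γ * mdpP P (polAct (detPol (pol k)) (u (k-1))) x a := by
    intro k x a
    cases k with
    | zero =>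
      have h := hQ (detPol (pol 0)) (isPolicy_detPol _)
      simp only [Nat.zero_sub]
      rw [hu0]
      exact (congrFun (congrFun h x) a).symm
    | succ n =>
      simp only [Nat.add_sub_cancel]
      rw [hurec n]
      rfl
  have main : ∀ k, ∀ x,
      (polAct (detPol (pol (k - 1))) (u (k - 2)) x
          + ∑ j ∈ Finset.range k, γ ^ j * polAct (detPol (pol (k - 1)))
              (PprodN P (fun i => detPol (pol i)) (k - 1 - j) j (εf (k - j))) x
          - γ ^ k * H
        ≤ v k x) ∧
      v k x ≤
        polAct (detPol (pol k)) (u (k - 1)) x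
          + ∑ j ∈ Finset.range k, γ ^ j * polAct (detPol (pol k))
              (PprodN P (fun i => detPol (pol i)) (k - j) j (εf (k - j))) x
          + γ ^ k * H := by
    intro k
    induction k with
    | zero =>
      intro x
      have h := abs_le.mp (hu0abs x (pol 0 x))
      simp only [Nat.zero_sub, Finset.range_zero, Finset.sum_empty, pow_zero, one_mul,
        add_zero, polAct_detPol, hv0]
      constructor <;> linarith [h.1, h.2]
    | succ k ih =>
      intro x
      have e2 : k + 1 - 2 = k - 1 := by omega
      simp only [Nat.add_sub_cancel, e2, polAct_detPol]
      constructor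
      · -- lower bound
        have h1 : r x (pol k x) + γ * mdpP P (v k) x (pol k x) + εf (k+1) x (pol k x)
            ≤ v (k+1) x := by
          have h := hsandL k x; rwa [hqd] at h
        have h2 : mdpP P (fun z =>
              polAct (detPol (pol (k - 1))) (u (k - 2)) z
              + ∑ j ∈ Finset.range k, γ ^ j * polAct (detPol (pol (k - 1)))
                  (PprodN P (fun i => detPol (pol i)) (k - 1 - j) j (εf (k - j))) z
              - γ ^ k * H) x (pol k x)
            ≤ mdpP P (v k) x (pol k x) :=
          mdpP_mono P hPpos (fun z => (ih z).1) x (pol k x)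
        have h4 : ∀ j ∈ Finset.range k,
            mdpP P (fun z => γ ^ j * polAct (detPol (pol (k - 1)))
                (PprodN P (fun i => detPol (pol i)) (k - 1 - j) j (εf (k - j))) z) x (pol k x)
            = γ ^ j * PprodN P (fun i => detPol (pol i)) (k - 1 - j) (j+1) (εf (k - j))
                x (pol k x) := by
          intro j hj
          have hk : k - 1 - j + j = k - 1 := by
            have := Finset.mem_range.mp hj; omega
          rw [PprodN_succ, hk, mdpP_smul P (γ^j) (polAct (detPol (pol (k - 1)))
            (PprodN P (fun i => detPol (pol i)) (k - 1 - j) j (εf (k - j)))) x (pol k x)]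
        have h3 : mdpP P (fun z =>
              polAct (detPol (pol (k - 1))) (u (k - 2)) z
              + ∑ j ∈ Finset.range k, γ ^ j * polAct (detPol (pol (k - 1)))
                  (PprodN P (fun i => detPol (pol i)) (k - 1 - j) j (εf (k - j))) z
              - γ ^ k * H) x (pol k x)
            = mdpP P (polAct (detPol (pol (k - 1))) (u (k - 2))) x (pol k x)
              + ∑ j ∈ Finset.range k, γ ^ j * PprodN P (fun i => detPol (pol i))
                  (k - 1 - j) (j+1) (εf (k - j)) x (pol k x)
              - γ ^ k * H := by
          rw [mdpP_decomp_sub P hPsum (polAct (detPol (pol (k - 1))) (u (k - 2))) k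
            (fun j z => γ ^ j * polAct (detPol (pol (k - 1)))
              (PprodN P (fun i => detPol (pol i)) (k - 1 - j) j (εf (k - j))) z)
            (γ ^ k * H) x (pol k x), Finset.sum_congr rfl h4]
        have h9 : γ * (mdpP P (polAct (detPol (pol (k - 1))) (u (k - 2))) x (pol k x)
              + ∑ j ∈ Finset.range k, γ ^ j * PprodN P (fun i => detPol (pol i))
                  (k - 1 - j) (j+1) (εf (k - j)) x (pol k x)
              - γ ^ k * H)
            ≤ γ * mdpP P (v k) x (pol k x) := by
          rw [← h3]; exact mul_le_mul_of_nonneg_left h2 hγ0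
        have h8 : u (k - 1) x (pol k x)
            = r x (pol k x) + γ * mdpP P (polAct (detPol (pol (k - 1)))
                (u (k - 2))) x (pol k x) := by
          have h := hub (k - 1) x (pol k x)
          rwa [show k - 1 - 1 = k - 2 by omega] at h
        have h7 : γ * ∑ j ∈ Finset.range k, γ ^ j * PprodN P (fun i => detPol (pol i))
              (k - 1 - j) (j+1) (εf (k - j)) x (pol k x)
            = ∑ j ∈ Finset.range k, γ ^ (j+1) * PprodN P (fun i => detPol (pol i))
              (k - 1 - j) (j+1) (εf (k - j)) x (pol k x) := by
          rw [Finset.mul_sum]; exact Finset.sum_congr rfl fun j _ => by ring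
        have h5 : ∑ j ∈ Finset.range (k+1), γ ^ j * PprodN P (fun i => detPol (pol i))
              (k - j) j (εf (k + 1 - j)) x (pol k x)
            = εf (k+1) x (pol k x) + ∑ j ∈ Finset.range k, γ ^ (j+1)
                * PprodN P (fun i => detPol (pol i)) (k - 1 - j) (j+1) (εf (k - j))
                  x (pol k x) := by
          rw [Finset.sum_range_succ', add_comm]
          congr 1
          · simp [PprodN]
          · apply Finset.sum_congr rfl
            intro j hj
            rw [show k - (j+1) = k - 1 - j by omega, show k + 1 - (j+1) = k - j by omega]
        have h10 : γ * (γ ^ k * H) = γ ^ (k+1) * H := by ring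
        rw [h5]
        linarith [h1, h9, h7, h8, h10]
      · -- upper bound
        have h1 : v (k+1) x
            ≤ r x (pol (k+1) x) + γ * mdpP P (v k) x (pol (k+1) x)
              + εf (k+1) x (pol (k+1) x) := by
          have h := hsandU k x; rwa [hqd] at h
        have h2 : mdpP P (v k) x (pol (k+1) x)
            ≤ mdpP P (fun z =>
              polAct (detPol (pol k)) (u (k - 1)) z
              + ∑ j ∈ Finset.range k, γ ^ j * polAct (detPol (pol k))
                  (PprodN P (fun i => detPol (pol i)) (k - j) j (εf (k - j))) z
              + γ ^ k * H) x (pol (k+1) x) :=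
          mdpP_mono P hPpos (fun z => (ih z).2) x (pol (k+1) x)
        have h4 : ∀ j ∈ Finset.range k,
            mdpP P (fun z => γ ^ j * polAct (detPol (pol k))
                (PprodN P (fun i => detPol (pol i)) (k - j) j (εf (k - j))) z) x (pol (k+1) x)
            = γ ^ j * PprodN P (fun i => detPol (pol i)) (k - j) (j+1) (εf (k - j))
                x (pol (k+1) x) := by
          intro j hj
          have hk : k - j + j = k := by
            have := Finset.mem_range.mp hj; omega
          rw [PprodN_succ, hk, mdpP_smul P (γ^j) (polAct (detPol (pol k))
            (PprodN P (fun i => detPol (pol i)) (k - j) j (εf (k - j)))) x (pol (k+1) x)]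
        have h3 : mdpP P (fun z =>
              polAct (detPol (pol k)) (u (k - 1)) z
              + ∑ j ∈ Finset.range k, γ ^ j * polAct (detPol (pol k))
                  (PprodN P (fun i => detPol (pol i)) (k - j) j (εf (k - j))) z
              + γ ^ k * H) x (pol (k+1) x)
            = mdpP P (polAct (detPol (pol k)) (u (k - 1))) x (pol (k+1) x)
              + ∑ j ∈ Finset.range k, γ ^ j * PprodN P (fun i => detPol (pol i))
                  (k - j) (j+1) (εf (k - j)) x (pol (k+1) x)
              + γ ^ k * H := by
          rw [mdpP_decomp P hPsum (polAct (detPol (pol k)) (u (k - 1))) k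
            (fun j z => γ ^ j * polAct (detPol (pol k))
              (PprodN P (fun i => detPol (pol i)) (k - j) j (εf (k - j))) z)
            (γ ^ k * H) x (pol (k+1) x), Finset.sum_congr rfl h4]
        have h9 : γ * mdpP P (v k) x (pol (k+1) x)
            ≤ γ * (mdpP P (polAct (detPol (pol k)) (u (k - 1))) x (pol (k+1) x)
              + ∑ j ∈ Finset.range k, γ ^ j * PprodN P (fun i => detPol (pol i))
                  (k - j) (j+1) (εf (k - j)) x (pol (k+1) x)
              + γ ^ k * H) := by
          rw [← h3]; exact mul_le_mul_of_nonneg_left h2 hγ0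
        have h8 : u k x (pol (k+1) x)
            = r x (pol (k+1) x) + γ * mdpP P (polAct (detPol (pol k))
                (u (k - 1))) x (pol (k+1) x) := hub k x (pol (k+1) x)
        have h7 : γ * ∑ j ∈ Finset.range k, γ ^ j * PprodN P (fun i => detPol (pol i))
              (k - j) (j+1) (εf (k - j)) x (pol (k+1) x)
            = ∑ j ∈ Finset.range k, γ ^ (j+1) * PprodN P (fun i => detPol (pol i))
              (k - j) (j+1) (εf (k - j)) x (pol (k+1) x) := by
          rw [Finset.mul_sum]; exact Finset.sum_congr rfl fun j _ => by ring
        have h5 : ∑ j ∈ Finset.range (k+1), γ ^ j * PprodN P (fun i => detPol (pol i))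
              (k + 1 - j) j (εf (k + 1 - j)) x (pol (k+1) x)
            = εf (k+1) x (pol (k+1) x) + ∑ j ∈ Finset.range k, γ ^ (j+1)
                * PprodN P (fun i => detPol (pol i)) (k - j) (j+1) (εf (k - j))
                  x (pol (k+1) x) := by
          rw [Finset.sum_range_succ', add_comm]
          congr 1
          · simp [PprodN]
          · apply Finset.sum_congr rfl
            intro j hj
            rw [show k + 1 - (j+1) = k - j by omega]
        have h10 : γ * (γ ^ k * H) = γ ^ (k+1) * H := by ring
        rw [h5]
        linarith [h1, h9, h7, h8, h10]
  intro k hk x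
  exact main k x
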